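/- Let p, q be nonnegative integers with q ≥ 1. Then for all nonnegative integers i, j, A_{p,q}(i,j)/A_{p,q-1}(i,j) ≥ (p+q+i+1)/(p+q+1), where the ratio is taken as a real number. -/

import Mathlib

/-!
Writing `A_q` for `A_{p,q}`, the recurrence yields the identity
`(p+q+2) A_{q+1}(i+1,j) = (p+q+i+3) A_q(i+1,j) + (j+1) A_q(i,j+1)`
(both sides satisfy the same recurrence and boundary values). Its last term is nonnegative, so
`(p+q+i+2) A_q(i,j) ≤ (p+q+2) A_{q+1}(i,j)`, which is the claimed bound after dividing.
-/

/-- The generalized Eulerian number `eulerA p q i j` counts the paths in the Euler graph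
from `(p, q)` to `(p + i, q + j)`.  It is defined by the initial conditions
`eulerA p q i 0 = (q+1)^i`, `eulerA p q 0 j = (p+1)^j` and the recurrence
`eulerA p q i j = (j+q+1) * eulerA p q (i-1) j + (i+p+1) * eulerA p q i (j-1)`. -/
def eulerA (p q : ℕ) : ℕ → ℕ → ℕ
  | i, 0 => (q + 1) ^ i
  | 0, j + 1 => (p + 1) ^ (j + 1)
  | i + 1, j + 1 =>
      (j + 1 + q + 1) * eulerA p q i (j + 1) + (i + 1 + p + 1) * eulerA p q (i + 1) j

section

variable (p q : ℕ)

@[simp]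
lemma eulerA_zero_right (i : ℕ) : eulerA p q i 0 = (q + 1) ^ i := by
  simp [eulerA]

@[simp]
lemma eulerA_zero_left (j : ℕ) : eulerA p q 0 j = (p + 1) ^ j := by
  cases j <;> simp [eulerA]

lemma eulerA_succ_succ (i j : ℕ) :
    eulerA p q (i + 1) (j + 1) =
      (j + q + 2) * eulerA p q i (j + 1) + (i + p + 2) * eulerA p q (i + 1) j := by
  simp only [eulerA]
  ring

lemma eulerA_pos (i j : ℕ) : 0 < eulerA p q i j := by
  induction i generalizing j with
  | zero => simp
  | succ i ih =>
    induction j with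
    | zero => simp
    | succ j ihj =>
      rw [eulerA_succ_succ]
      have := ih (j + 1)
      positivity

lemma eulerA_one_right (i : ℕ) :
    (eulerA p q i 1 : ℤ) = (p + q + 2) * (q + 2) ^ (i + 1) - (p + q + i + 3) * (q + 1) ^ (i + 1) := by
  induction i with
  | zero => push_cast [eulerA_zero_left]; ring
  | succ i ih =>
    have hrec := eulerA_succ_succ p q i 0
    simp only [eulerA_zero_right] at hrec
    push_cast [hrec, ih]
    ring

lemma mul_eulerA_succ_zero_left (j : ℕ) :
    (p + q + 2) * eulerA p (q + 1) 1 j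
      = (p + q + 3) * eulerA p q 1 j + (j + 1) * (p + 1) ^ (j + 1) := by
  induction j with
  | zero => simp only [eulerA_zero_right]; ring
  | succ j ih =>
    have hA := eulerA_succ_succ p (q + 1) 0 j
    have hB := eulerA_succ_succ p q 0 j
    simp only [eulerA_zero_left] at hA hB
    rw [hA, hB]
    linear_combination (p + 2) * ih

lemma mul_eulerA_succ_zero_right (i : ℕ) :
    (p + q + 2) * eulerA p (q + 1) (i + 1) 0
      = (p + q + i + 3) * eulerA p q (i + 1) 0 + eulerA p q i 1 := by
  zify
  rw [eulerA_one_right]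
  push_cast [eulerA_zero_right]
  ring

lemma mul_eulerA_succ (i j : ℕ) :
    (p + q + 2) * eulerA p (q + 1) (i + 1) j
      = (p + q + i + 3) * eulerA p q (i + 1) j + (j + 1) * eulerA p q i (j + 1) := by
  induction i generalizing j with
  | zero => simpa using mul_eulerA_succ_zero_left p q j
  | succ i ih =>
    induction j with
    | zero => simpa using mul_eulerA_succ_zero_right p q (i + 1)
    | succ j ihj =>
      have hA := eulerA_succ_succ p (q + 1) (i + 1) j
      have hB := eulerA_succ_succ p q (i + 1) j
      have hB' := eulerA_succ_succ p q i (j + 1)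
      have ih' := ih (j + 1)
      zify at hA hB hB' ih' ihj ⊢
      linear_combination (p + q + 2 : ℤ) * hA - (p + q + i + 4 : ℤ) * hB
        - (j + 2 : ℤ) * hB' + (j + q + 3 : ℤ) * ih' + (i + p + 3 : ℤ) * ihj

lemma mul_eulerA_le_mul_eulerA_succ (i j : ℕ) :
    (p + q + i + 2) * eulerA p q i j ≤ (p + q + 2) * eulerA p (q + 1) i j := by
  cases i with
  | zero => simp
  | succ i =>
    rw [mul_eulerA_succ]
    exact le_add_right (le_of_eq (by ring))

end

theorem stmt15 (p q : ℕ) (hq : 1 ≤ q) (i j : ℕ) :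
    ((p : ℝ) + q + i + 1) / ((p : ℝ) + q + 1) ≤
      (eulerA p q i j : ℝ) / (eulerA p (q - 1) i j) := by
  obtain ⟨r, rfl⟩ := Nat.exists_eq_add_of_le' hq
  have hpos : (0 : ℝ) < eulerA p r i j := by exact_mod_cast eulerA_pos p r i j
  rw [Nat.add_sub_cancel, div_le_div_iff₀ (by positivity) hpos]
  have h : ((p + r + i + 2 : ℕ) : ℝ) * eulerA p r i j ≤ ((p + r + 2 : ℕ) : ℝ) * eulerA p (r + 1) i j := by
    exact_mod_cast mul_eulerA_le_mul_eulerA_succ p r i j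
  push_cast at h ⊢
  linarith
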